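/- Every nontrivial free conformal module of rank two over the loop super-Virasoro conformal superalgebra 𝔠𝔩𝔰, with even part ℂ[∂]x and odd part ℂ[∂]y each free of rank one, is isomorphic to M_{a,b,c} or to M'_{a,b,c} for some a,b ∈ ℂ and c ∈ ℂ*. -/

import Mathlib

open Polynomial

/-- `ℂ[∂]`. -/
abbrev P := Polynomial ℂ
/-- The free `ℂ[∂]`-module `V = ℂ[∂]x ⊕ ℂ[∂]y`: the first component is the coefficient of
the even generator `x`, the second that of the odd generator `y`. -/
abbrev V := P × P

/-- Substitution `∂ ↦ ∂ + λ`. -/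
noncomputable def sh (l : ℂ) (f : P) : P := f.comp (Polynomial.X + Polynomial.C l)

/-- The action of `∂` on `V`. -/
noncomputable def dV (v : V) : V := (Polynomial.X * v.1, Polynomial.X * v.2)

/-- The `λ`-action of `L_i` on `M_{a,b,c}`:
`L_i ₗ x = cⁱ(∂+aλ+b)x`, `L_i ₗ y = cⁱ(∂+(a+1/2)λ+b)y`, extended by
`L_i ₗ (f(∂)v) = f(∂+λ) L_i ₗ v`. -/
noncomputable def LM (a b c : ℂ) (i : ℤ) (l : ℂ) (v : V) : V :=
  (Polynomial.C (c ^ i) * sh l v.1 * (Polynomial.X + Polynomial.C (a*l + b)),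
   Polynomial.C (c ^ i) * sh l v.2 * (Polynomial.X + Polynomial.C ((a + 1/2)*l + b)))

/-- The `λ`-action of `G_i` on `M_{a,b,c}`:
`G_i ₗ x = cⁱ y`, `G_i ₗ y = cⁱ(∂+2aλ+b)x`. -/
noncomputable def GM (a b c : ℂ) (i : ℤ) (l : ℂ) (v : V) : V :=
  (Polynomial.C (c ^ i) * sh l v.2 * (Polynomial.X + Polynomial.C (2*a*l + b)),
   Polynomial.C (c ^ i) * sh l v.1)

/-- The `λ`-action of `L_i` on `M'_{a,b,c}`:
`L_i ₗ x = cⁱ(∂+aλ+b)x`, `L_i ₗ y = cⁱ(∂+(a−1/2)λ+b)y`. -/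
noncomputable def LM' (a b c : ℂ) (i : ℤ) (l : ℂ) (v : V) : V :=
  (Polynomial.C (c ^ i) * sh l v.1 * (Polynomial.X + Polynomial.C (a*l + b)),
   Polynomial.C (c ^ i) * sh l v.2 * (Polynomial.X + Polynomial.C ((a - 1/2)*l + b)))

/-- The `λ`-action of `G_i` on `M'_{a,b,c}`:
`G_i ₗ x = cⁱ(∂+(2a−1)λ+b)y`, `G_i ₗ y = cⁱ x`. -/
noncomputable def GM' (a b c : ℂ) (i : ℤ) (l : ℂ) (v : V) : V :=
  (Polynomial.C (c ^ i) * sh l v.2,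
   Polynomial.C (c ^ i) * sh l v.1 * (Polynomial.X + Polynomial.C ((2*a - 1)*l + b)))

/-- An isomorphism of conformal `𝔠𝔩𝔰`-modules (see STATEMENT 12). -/
def ClsIso (L₁ G₁ L₂ G₂ : ℤ → ℂ → V → V) : Prop :=
  ∃ φ : V ≃ₗ[ℂ] V,
    (∀ v : V, φ (dV v) = dV (φ v)) ∧
    (∀ v : V, v.2 = 0 → (φ v).2 = 0) ∧ (∀ v : V, v.1 = 0 → (φ v).1 = 0) ∧
    (∀ (i : ℤ) (l : ℂ) (v : V),
      φ (L₁ i l v) = L₂ i l (φ v) ∧ φ (G₁ i l v) = G₂ i l (φ v))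

/-- `(LA, GA)` is a conformal module structure of the loop super-Virasoro conformal
superalgebra `𝔠𝔩𝔰` on the free rank-two `ℂ[∂]`-module `V = ℂ[∂]x ⊕ ℂ[∂]y`, with even
part `ℂ[∂]x` and odd part `ℂ[∂]y`: the `λ`-actions are `ℂ`-linear, polynomial in `λ`,
compatible with `∂`, parity-respecting, and satisfy the conformal Jacobi identities
coming from `[L_i ₗ L_j] = (∂+2λ)L_{i+j}`, `[L_i ₗ G_j] = (∂+(3/2)λ)G_{i+j}`,
`[G_i ₗ G_j] = 2L_{i+j}`. -/
def IsClsModule (LA GA : ℤ → ℂ → V →ₗ[ℂ] V) : Prop :=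
  (∀ (i : ℤ) (l : ℂ) (v : V),
      LA i l (dV v) = dV (LA i l v) + l • LA i l v
    ∧ GA i l (dV v) = dV (GA i l v) + l • GA i l v) ∧
  (∀ (i : ℤ) (l : ℂ) (v : V),
      (v.2 = 0 → (LA i l v).2 = 0 ∧ (GA i l v).1 = 0)
    ∧ (v.1 = 0 → (LA i l v).1 = 0 ∧ (GA i l v).2 = 0)) ∧
  (∀ (i : ℤ) (v : V), ∃ (N : ℕ) (w u : ℕ → V), ∀ l : ℂ,
      LA i l v = ∑ k ∈ Finset.range N, l ^ k • w k
    ∧ GA i l v = ∑ k ∈ Finset.range N, l ^ k • u k) ∧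
  (∀ (i j : ℤ) (l m : ℂ) (v : V),
      (l - m) • LA (i+j) (l+m) v = LA i l (LA j m v) - LA j m (LA i l v)
    ∧ ((1/2)*l - m) • GA (i+j) (l+m) v = LA i l (GA j m v) - GA j m (LA i l v)
    ∧ (2 : ℂ) • LA (i+j) (l+m) v = GA i l (GA j m v) + GA j m (GA i l v))


/-!
Because `∂` acts freely and the `λ`-actions are compatible with `∂` and with the parity, the
module is described by four polynomials in `∂`, depending polynomially on `λ`:
`L_i ₗ x = p x`, `L_i ₗ y = q y`, `G_i ₗ y = r x`, `G_i ₗ x = s y`. The Jacobi identities for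
`L, L` say that `ℂ[∂]x` and `ℂ[∂]y` are rank-one `𝔠𝔩𝔳`-modules, so `p = cⁱ(∂ + aλ + b)` and
`q = dⁱ(∂ + a'λ + b')` unless they vanish. The identities for `G_0, G_0` at `λ = μ = 0` give
`p 0 0 = s 0 0 · r 0 0 = q 0 0`, and if `L` acts trivially the one for `L_0, G_j` kills `G_j`;
so in a nontrivial module neither `p` nor `q` vanishes. Then `[G_i ₗ G_i]` gives
`s(∂ + λ) r = c^{2i}(∂ + 2aλ + b)`, so `deg s + deg r = 1`, and comparing top coefficients in the
Jacobi identity for `L_0, G_j` shows that `deg s` is the same for all `i, λ` and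
`deg s + a' - a = 1/2`. If `deg s = 0`, the remaining identities give `a' = a + 1/2`, `b' = b`,
`d = c` and `s = t cⁱ`: this is `M_{a,b,c}` after rescaling `x` by `t`. If `deg s = 1`, then
`deg r = 0` and the same argument with `x` and `y` exchanged gives `M'_{a+1/2,b,c}`.
-/

namespace Cls

lemma sh_eq_taylor (l : ℂ) (f : P) : sh l f = taylor l f := (taylor_apply ..).symm

@[simp] lemma sh_C (l a : ℂ) : sh l (C a) = C a := by simp [sh_eq_taylor]
@[simp] lemma sh_X (l : ℂ) : sh l (X : P) = X + C l := by simp [sh_eq_taylor]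
@[simp] lemma sh_zero (l : ℂ) : sh l (0 : P) = 0 := by simp [sh_eq_taylor]
@[simp] lemma sh_one (l : ℂ) : sh l (1 : P) = 1 := by simp [sh_eq_taylor]
@[simp] lemma sh_zero_left (f : P) : sh 0 f = f := by simp [sh_eq_taylor]
@[simp] lemma sh_mul (l : ℂ) (f g : P) : sh l (f * g) = sh l f * sh l g := by
  simp [sh_eq_taylor, taylor_mul]
@[simp] lemma sh_add (l : ℂ) (f g : P) : sh l (f + g) = sh l f + sh l g := by
  simp [sh_eq_taylor]

lemma sh_smul (l a : ℂ) (f : P) : sh l (a • f) = a • sh l f := by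
  simp [sh_eq_taylor]

lemma sh_X_add_C (l β : ℂ) : sh l (X + C β) = X + C (l + β) := by
  simp only [sh_add, sh_X, sh_C, map_add]; ring

lemma natDegree_sh (l : ℂ) (f : P) : (sh l f).natDegree = f.natDegree := by
  rw [sh_eq_taylor, natDegree_taylor]

lemma sh_eq_zero_iff {l : ℂ} {f : P} : sh l f = 0 ↔ f = 0 := by
  rw [sh_eq_taylor, taylor_eq_zero]

lemma coeff_sh_of_natDegree_le {f : P} {n : ℕ} (h : f.natDegree ≤ n) (l : ℂ) :
    (sh l f).coeff n = f.coeff n := by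
  rcases h.eq_or_lt with rfl | hlt
  · rw [sh_eq_taylor, coeff_taylor_natDegree, leadingCoeff]
  · rw [coeff_eq_zero_of_natDegree_lt hlt, coeff_eq_zero_of_natDegree_lt (by rwa [natDegree_sh])]

lemma coeff_sh_of_natDegree_le_succ {f : P} {n : ℕ} (h : f.natDegree ≤ n + 1) (l : ℂ) :
    (sh l f).coeff n = f.coeff n + (n + 1 : ℂ) * l * f.coeff (n + 1) := by
  have hasse : hasseDeriv n f = C (f.coeff n) + C ((n + 1 : ℂ) * f.coeff (n + 1)) * X := by
    ext k
    rw [hasseDeriv_coeff]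
    match k with
    | 0 => simp
    | 1 =>
      rw [Nat.add_comm 1 n, Nat.choose_succ_self_right]
      simp [coeff_C]
    | k + 2 =>
      have h0 : f.coeff (k + 2 + n) = 0 := coeff_eq_zero_of_natDegree_lt (by omega)
      simp [h0, coeff_one]
  rw [sh_eq_taylor, taylor_coeff, hasse]
  simp only [eval_add, eval_C, eval_mul, eval_X]
  ring

lemma coeff_mul_X_add_C_succ {R : Type*} [CommSemiring R] (f : R[X]) (α : R) (n : ℕ) :
    (f * (X + C α)).coeff (n + 1) = f.coeff n + α * f.coeff (n + 1) := by
  rw [mul_add, coeff_add, coeff_mul_X, mul_comm f (C α), coeff_C_mul]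

lemma map_eq_sh_smul {M : Type*} [AddCommGroup M] [Module P M] [Module ℂ M] [IsScalarTower ℂ P M]
    (T : P →ₗ[ℂ] M) (l : ℂ) (h : ∀ f, T (X * f) = (X + C l) • T f) (f : P) :
    T f = sh l f • T 1 := by
  have hpow : ∀ n : ℕ, T (X ^ n) = (X + C l) ^ n • T 1 := by
    intro n
    induction n with
    | zero => simp
    | succ n ih => rw [pow_succ', h, ih, pow_succ', mul_smul]
  induction f using Polynomial.induction_on' with
  | add f g hf hg => rw [map_add, hf, hg, sh_add, add_smul]
  | monomial n a =>
    rw [← C_mul_X_pow_eq_monomial, ← smul_eq_C_mul, map_smul, hpow, ← smul_assoc]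
    simp [sh_eq_taylor]

def IsPolyFamily {M : Type*} [AddCommMonoid M] [Module ℂ M] (h : ℂ → M) : Prop :=
  ∃ (N : ℕ) (w : ℕ → M), ∀ l, h l = ∑ k ∈ Finset.range N, l ^ k • w k

namespace IsPolyFamily

lemma map {M M' : Type*} [AddCommMonoid M] [Module ℂ M] [AddCommMonoid M'] [Module ℂ M']
    {h : ℂ → M} (hh : IsPolyFamily h) (f : M →ₗ[ℂ] M') : IsPolyFamily (fun l => f (h l)) := by
  obtain ⟨N, w, hw⟩ := hh
  exact ⟨N, fun k => f (w k), fun l => by simp [hw]⟩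

lemma coeff {h : ℂ → P} (hh : IsPolyFamily h) (n : ℕ) : IsPolyFamily (fun l => (h l).coeff n) :=
  hh.map (lcoeff ℂ n)

lemma exists_eval {h : ℂ → ℂ} (hh : IsPolyFamily h) : ∃ H : P, ∀ l, h l = H.eval l := by
  obtain ⟨N, w, hw⟩ := hh
  refine ⟨∑ k ∈ Finset.range N, C (w k) * X ^ k, fun l => ?_⟩
  rw [hw, eval_finsetSum]
  simp only [eval_mul, eval_C, eval_pow, eval_X, smul_eq_mul, mul_comm]

lemma eq_eval_of_forall_ne {h : ℂ → ℂ} (hh : IsPolyFamily h) (G : P) (x₀ : ℂ)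
    (heq : ∀ l ≠ x₀, h l = G.eval l) (l : ℂ) : h l = G.eval l := by
  obtain ⟨H, hH⟩ := hh.exists_eval
  have : H = G := by
    refine eq_of_infinite_eval_eq H G ((Set.finite_singleton x₀).infinite_compl.mono ?_)
    intro x hx
    simp only [Set.mem_compl_iff, Set.mem_singleton_iff] at hx
    simp only [Set.mem_ofPred_eq, ← hH, heq x hx]
  rw [hH, this]

lemma exists_ne_zero_notMem {h : ℂ → ℂ} (hh : IsPolyFamily h) {l₀ : ℂ} (h₀ : h l₀ ≠ 0)
    {F : Set ℂ} (hF : F.Finite) : ∃ l ∉ F, h l ≠ 0 := by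
  by_contra! hzero
  obtain ⟨H, hH⟩ := hh.exists_eval
  have : H = 0 := by
    refine eq_zero_of_infinite_isRoot H (hF.infinite_compl.mono fun x hx => ?_)
    simp [IsRoot, ← hH, hzero x hx]
  exact h₀ (by rw [hH, this, eval_zero])

lemma exists_ne_zero_notMem' {h : ℂ → P} (hh : IsPolyFamily h) {l₀ : ℂ} (h₀ : h l₀ ≠ 0)
    {F : Set ℂ} (hF : F.Finite) : ∃ l ∉ F, h l ≠ 0 := by
  obtain ⟨n, hn⟩ : ∃ n, (h l₀).coeff n ≠ 0 := by
    by_contra! h'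
    exact h₀ (Polynomial.ext h')
  obtain ⟨l, hl, hne⟩ := (hh.coeff n).exists_ne_zero_notMem hn hF
  exact ⟨l, hl, fun h0 => hne (by simp [h0])⟩

lemma eq_const_of_forall_ne_zero {h : ℂ → ℂ} (hh : IsPolyFamily h) (hne : ∀ l, h l ≠ 0) (l : ℂ) :
    h l = h 0 := by
  obtain ⟨H, hH⟩ := hh.exists_eval
  have hdeg : H.degree = 0 := by
    by_contra hd
    obtain ⟨z, hz⟩ := IsAlgClosed.exists_root H hd
    exact hne z (by rw [hH]; exact hz)
  rw [hH, hH, eq_C_of_degree_le_zero hdeg.le, eval_C, eval_C]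

lemma exists_natDegree_le {h : ℂ → P} (hh : IsPolyFamily h) : ∃ D, ∀ l, (h l).natDegree ≤ D := by
  obtain ⟨N, w, hw⟩ := hh
  refine ⟨(Finset.range N).sup fun k => (w k).natDegree, fun l => ?_⟩
  rw [hw]
  refine natDegree_sum_le_of_forall_le _ _ fun k hk => ?_
  exact (natDegree_smul_le _ _).trans (Finset.le_sup (f := fun k => (w k).natDegree) hk)

lemma exists_natDegree_le_coeff_ne_zero {h : ℂ → P} (hh : IsPolyFamily h) {l₀ : ℂ}
    (h₀ : h l₀ ≠ 0) : ∃ n, (∀ l, (h l).natDegree ≤ n) ∧ ∃ l, (h l).coeff n ≠ 0 := by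
  classical
  obtain ⟨D, hD⟩ := hh.exists_natDegree_le
  have hQ : ∃ l, (h l).coeff (h l₀).natDegree ≠ 0 := ⟨l₀, leadingCoeff_ne_zero.mpr h₀⟩
  refine ⟨Nat.findGreatest (fun j => ∃ l, (h l).coeff j ≠ 0) D, fun l => ?_,
    Nat.findGreatest_spec (P := fun j => ∃ l, (h l).coeff j ≠ 0) (hD l₀) hQ⟩
  rw [natDegree_le_iff_coeff_eq_zero]
  intro N hN
  by_contra hc
  rcases le_or_gt N D with hND | hND
  · exact Nat.findGreatest_is_greatest hN hND ⟨l, hc⟩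
  · exact hc (coeff_eq_zero_of_natDegree_lt ((hD l).trans_lt hND))

end IsPolyFamily

lemma eq_X_add_C_of_sh_eq_add_C {g : P} {l : ℂ} (hl : l ≠ 0) (h : sh l g = g + C l) :
    ∃ b, g = X + C b := by
  have hle : g.natDegree ≤ 1 := by
    by_contra! hgt
    obtain ⟨k, hk⟩ : ∃ k, g.natDegree = k + 2 := ⟨g.natDegree - 2, by omega⟩
    have h2 := coeff_sh_of_natDegree_le_succ (f := g) (n := k + 1) hk.le l
    rw [h, coeff_add, coeff_C, if_neg (by omega)] at h2
    have hlead : g.coeff (k + 2) ≠ 0 := by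
      rw [← hk]; exact leadingCoeff_ne_zero.mpr (ne_zero_of_natDegree_gt hgt)
    have hz : ((k : ℂ) + 2) * l * g.coeff (k + 2) = 0 := by
      push_cast at h2
      linear_combination -h2
    exact mul_ne_zero (mul_ne_zero (by norm_cast) hl) hlead hz
  have hform := eq_X_add_C_of_natDegree_le_one hle
  have hcoeff := congrArg (coeff · 0) h
  rw [hform] at hcoeff
  simp only [sh_add, sh_mul, sh_C, sh_X, coeff_add, coeff_C_mul, mul_add, coeff_X_zero,
    coeff_C_zero] at hcoeff
  have hg1 : g.coeff 1 = 1 := mul_right_cancel₀ hl (by linear_combination hcoeff)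
  refine ⟨g.coeff 0, ?_⟩
  conv_lhs => rw [hform, hg1, map_one, one_mul]

lemma eq_affine_of_sub_mul_add {γ : ℂ → ℂ} (hγ : IsPolyFamily γ)
    (heq : ∀ l m, (l - m) * γ (l + m) = l * γ l - m * γ m) :
    ∃ a, ∀ l, γ l = a * l + γ 0 := by
  obtain ⟨E, hE⟩ := hγ.exists_eval
  have hpoly : (X - C 1) * sh 1 E = X * E - C (γ 1) := by
    refine Polynomial.funext fun r => ?_
    simp only [eval_mul, eval_sub, eval_X, eval_C, sh_eq_taylor, taylor_eval, ← hE]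
    linear_combination heq r 1
  have hdeg : E.natDegree ≤ 1 := by
    by_contra! hgt
    obtain ⟨k, hk⟩ : ∃ k, E.natDegree = k + 2 := ⟨E.natDegree - 2, by omega⟩
    have hc := congrArg (coeff · (k + 2)) hpoly
    simp only [sub_mul, mul_comm X, coeff_sub, coeff_mul_X, coeff_C_mul, one_mul, coeff_C,
      if_neg (by omega : k + 2 ≠ 0)] at hc
    rw [coeff_sh_of_natDegree_le_succ (n := k + 1) hk.le,
      coeff_sh_of_natDegree_le (n := k + 2) hk.le] at hc
    have hlead : E.coeff (k + 2) ≠ 0 := by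
      rw [← hk]; exact leadingCoeff_ne_zero.mpr (ne_zero_of_natDegree_gt hgt)
    have hz : ((k : ℂ) + 1) * E.coeff (k + 2) = 0 := by
      push_cast at hc
      linear_combination hc
    exact mul_ne_zero (by norm_cast) hlead hz
  refine ⟨E.coeff 1, fun l => ?_⟩
  rw [hE l, hE 0, eq_X_add_C_of_natDegree_le_one hdeg]
  simp

lemma eq_zpow_of_map_add {G₀ : Type*} [GroupWithZero G₀] {κ : ℤ → G₀} (h0 : κ 0 = 1) (hadd : ∀ i j, κ (i + j) = κ i * κ j) :
    κ 1 ≠ 0 ∧ ∀ i, κ i = κ 1 ^ i := by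
  have hne : κ 1 ≠ 0 := fun h => by simpa [h0, h] using hadd 1 (-1)
  refine ⟨hne, fun i => ?_⟩
  induction i using Int.induction_on with
  | zero => simp [h0]
  | succ n ih => rw [hadd, ih, zpow_add_one₀ hne]
  | pred n ih =>
    have h := hadd (-n - 1) 1
    rw [sub_add_cancel, ih] at h
    rw [zpow_sub_one₀ hne, h, mul_inv_cancel_right₀ hne]

lemma coeff_mul_of_natDegree_le_succ {R : Type*} [Semiring R] {f g : R[X]} {n : ℕ} (hf : f.natDegree ≤ n + 1)
    (hg : g.natDegree ≤ n + 1) :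
    (f * g).coeff (2 * n + 1) = f.coeff (n + 1) * g.coeff n + f.coeff n * g.coeff (n + 1) := by
  rw [coeff_mul, ← Finset.sum_subset (s₁ := {(n + 1, n), (n, n + 1)})]
  · rw [Finset.sum_pair (by simp)]
  · intro x hx
    simp only [Finset.mem_insert, Finset.mem_singleton] at hx
    rcases hx with rfl | rfl <;> simp <;> omega
  · intro x hx hnx
    replace hx := Finset.HasAntidiagonal.mem_antidiagonal.mp hx
    simp only [Finset.mem_insert, Finset.mem_singleton, Prod.ext_iff] at hnx
    rcases Nat.lt_or_ge x.1 n with h1 | h1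
    · rw [coeff_eq_zero_of_natDegree_lt (p := g) (by omega), mul_zero]
    · rw [coeff_eq_zero_of_natDegree_lt (p := f) (by omega), zero_mul]

lemma coeff_X_add_C_mul_sh_sub {f : P} {n : ℕ} (hf : f.natDegree ≤ n) (β l : ℂ) :
    ((X + C β) * (sh l f - f)).coeff n = n * l * f.coeff n := by
  cases n with
  | zero => simp [mul_coeff_zero, coeff_sh_of_natDegree_le hf]
  | succ k =>
    rw [mul_comm, coeff_mul_X_add_C_succ, coeff_sub, coeff_sub, coeff_sh_of_natDegree_le hf,
      coeff_sh_of_natDegree_le_succ hf]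
    push_cast
    ring

/-- `L_i ₗ f = f(∂ + λ) · p i λ` defines a `𝔠𝔩𝔳`-module structure on `ℂ[∂]`: this is the
conformal Jacobi identity for `[L_i ₗ L_j] = (∂ + 2λ) L_{i+j}`. -/
def IsLoopVirRankOne (p : ℤ → ℂ → P) : Prop :=
  ∀ i j l m, C (l - m) * p (i + j) (l + m) = sh l (p j m) * p i l - sh m (p i l) * p j m

namespace IsLoopVirRankOne

variable {p : ℤ → ℂ → P}

lemma exists_zero_zero_eq (hE : IsLoopVirRankOne p) (hpoly : ∀ i, IsPolyFamily (p i))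
    {i₀ : ℤ} {l₀ : ℂ} (h₀ : p i₀ l₀ ≠ 0) : ∃ b, p 0 0 = X + C b := by
  obtain ⟨l, hl0, hl⟩ := (hpoly i₀).exists_ne_zero_notMem' h₀ (Set.finite_singleton 0)
  refine eq_X_add_C_of_sh_eq_add_C (l := l) hl0 ?_
  have h := hE i₀ 0 l 0
  rw [add_zero, add_zero, sub_zero, sh_zero_left] at h
  have h' : (sh l (p 0 0) - p 0 0 - C l) * p i₀ l = 0 := by linear_combination -h
  linear_combination (mul_eq_zero.mp h').resolve_right hl

/-- Comparing the coefficients of `∂^(2n-1)` in the Jacobi identity for `L_0`, `L_0` bounds the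
degree `n` of `L_0 ₗ 1` by one. -/
lemma natDegree_zero_le_one (hE : IsLoopVirRankOne p) (hpoly : ∀ i, IsPolyFamily (p i)) {b : ℂ}
    (hb : p 0 0 = X + C b) (l : ℂ) : (p 0 l).natDegree ≤ 1 := by
  obtain ⟨n, hdeg, l₀, hl₀⟩ := (hpoly 0).exists_natDegree_le_coeff_ne_zero (l₀ := 0)
    (by rw [hb]; exact X_add_C_ne_zero b)
  suffices n ≤ 1 from (hdeg l).trans this
  by_contra! hgt
  obtain ⟨k, rfl⟩ : ∃ k, n = k + 2 := ⟨n - 2, by omega⟩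
  obtain ⟨l₁, -, hl₁⟩ := ((hpoly 0).coeff (k + 2)).exists_ne_zero_notMem hl₀ Set.finite_empty
  obtain ⟨l₂, hl₁₂, hl₂⟩ :=
    ((hpoly 0).coeff (k + 2)).exists_ne_zero_notMem hl₀ (Set.finite_singleton l₁)
  have hd₁ : (p 0 l₁).natDegree ≤ k + 1 + 1 := hdeg l₁
  have hd₂ : (p 0 l₂).natDegree ≤ k + 1 + 1 := hdeg l₂
  have h := congrArg (coeff · (2 * (k + 1) + 1)) (hE 0 0 l₁ l₂)
  simp only [add_zero, coeff_sub, coeff_C_mul] at h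
  rw [coeff_mul_of_natDegree_le_succ (by rwa [natDegree_sh]) hd₁,
    coeff_mul_of_natDegree_le_succ (by rwa [natDegree_sh]) hd₂,
    coeff_sh_of_natDegree_le hd₂, coeff_sh_of_natDegree_le_succ hd₂,
    coeff_sh_of_natDegree_le hd₁, coeff_sh_of_natDegree_le_succ hd₁,
    coeff_eq_zero_of_natDegree_lt (by have := hdeg (l₁ + l₂); omega), mul_zero] at h
  have hz : ((k : ℂ) + 2) * (l₁ - l₂) * ((p 0 l₁).coeff (k + 2) * (p 0 l₂).coeff (k + 2)) = 0 := by
    push_cast at h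
    linear_combination -h
  exact mul_ne_zero (mul_ne_zero (by norm_cast)
    (sub_ne_zero.mpr fun h => hl₁₂ (Set.mem_singleton_iff.mpr h.symm))) (mul_ne_zero hl₁ hl₂) hz

lemma exists_zero_eq (hE : IsLoopVirRankOne p) (hpoly : ∀ i, IsPolyFamily (p i)) {b : ℂ}
    (hb : p 0 0 = X + C b) : ∃ a, ∀ l, p 0 l = X + C (a * l + b) := by
  set γ₁ : ℂ → ℂ := fun l => (p 0 l).coeff 1
  set γ₀ : ℂ → ℂ := fun l => (p 0 l).coeff 0
  have hform (l : ℂ) : p 0 l = C (γ₁ l) * X + C (γ₀ l) :=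
    eq_X_add_C_of_natDegree_le_one (hE.natDegree_zero_le_one hpoly hb l)
  have hcoeffs (l m : ℂ) : (l - m) * γ₁ (l + m) = (l - m) * (γ₁ l * γ₁ m)
      ∧ (l - m) * γ₀ (l + m) = l * γ₁ m * γ₀ l - m * γ₁ l * γ₀ m := by
    have h := hE 0 0 l m
    simp only [add_zero] at h
    rw [hform (l + m), hform l, hform m] at h
    simp only [sh_add, sh_mul, sh_C, sh_X] at h
    have h₁ := congrArg (fun q => (derivative q).eval 0) h
    have h₀ := congrArg (eval 0) h
    simp only [derivative_mul, derivative_add, derivative_sub, derivative_C, derivative_X,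
      eval_add, eval_sub, eval_mul, eval_X, eval_C, zero_mul, mul_zero,
      add_zero, zero_add, mul_one] at h₁ h₀
    exact ⟨by linear_combination h₁, by linear_combination h₀⟩
  have hγ₁0 : γ₁ 0 = 1 := by simp [γ₁, hb]
  have hγ₁ (l : ℂ) : γ₁ l = 1 := by
    refine ((hpoly 0).coeff 1).eq_const_of_forall_ne_zero (fun l hl => ?_) l |>.trans hγ₁0
    change γ₁ l = 0 at hl
    rcases eq_or_ne l 0 with rfl | hl0
    · exact one_ne_zero (hγ₁0.symm.trans hl)
    · have h := (hcoeffs l (-l)).1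
      rw [add_neg_cancel, hγ₁0, hl, zero_mul, mul_zero, mul_one] at h
      exact hl0 (by linear_combination h / 2)
  obtain ⟨a, ha⟩ := eq_affine_of_sub_mul_add (γ := γ₀) ((hpoly 0).coeff 0) fun l m => by
    linear_combination (hcoeffs l m).2 + l * γ₀ l * hγ₁ m - m * γ₀ m * hγ₁ l
  have hγ₀0 : γ₀ 0 = b := by simp [γ₀, hb]
  exact ⟨a, fun l => by rw [hform l, hγ₁ l, ha l, hγ₀0, map_one, one_mul]⟩

lemma C_mul_eq_mul_sh_sub (hE : IsLoopVirRankOne p) {a b : ℂ}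
    (hp₀ : ∀ l, p 0 l = X + C (a * l + b)) (i : ℤ) (m : ℂ) :
    C m * p i m = (X + C (a * m + b)) * (sh m (p i 0) - p i 0) := by
  have h := hE 0 i m 0
  rw [zero_add, add_zero, sub_zero, hp₀, sh_zero_left] at h
  rw [h]
  ring

lemma exists_eq_C_mul (hE : IsLoopVirRankOne p) (hpoly : ∀ i, IsPolyFamily (p i)) {a b : ℂ}
    (hp₀ : ∀ l, p 0 l = X + C (a * l + b)) (i : ℤ) :
    ∃ κ, ∀ l, p i l = C κ * (X + C (a * l + b)) := by
  by_cases hzero : ∃ l, p i l ≠ 0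
  swap
  · exact ⟨0, fun l => by rw [not_exists_not.mp hzero l, map_zero, zero_mul]⟩
  obtain ⟨l₀, hl₀⟩ := hzero
  obtain ⟨n, hdeg, l₁, hl₁⟩ := (hpoly i).exists_natDegree_le_coeff_ne_zero hl₀
  have htop (m : ℂ) : (p i m).coeff n = n * (p i 0).coeff n := by
    refine (((hpoly i).coeff n).eq_eval_of_forall_ne (C (n * (p i 0).coeff n)) 0
      (fun m hm => ?_) m).trans (eval_C ..)
    have h := congrArg (coeff · n) (hE.C_mul_eq_mul_sh_sub hp₀ i m)
    simp only [coeff_C_mul, coeff_X_add_C_mul_sh_sub (hdeg 0)] at h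
    rw [eval_C]
    exact mul_left_cancel₀ hm (by linear_combination h)
  have hκ : (p i 0).coeff n ≠ 0 := fun h => hl₁ (by rw [htop, h, mul_zero])
  obtain rfl : n = 1 := by
    have h := htop 0
    exact_mod_cast mul_right_cancel₀ hκ (by linear_combination -h : (n : ℂ) * _ = 1 * _)
  set κ := (p i 0).coeff 1
  have hform (m : ℂ) : p i m = C κ * X + C ((p i m).coeff 0) := by
    have h₁ : (p i m).coeff 1 = κ := by rw [htop m, Nat.cast_one, one_mul]
    rw [← h₁]
    exact eq_X_add_C_of_natDegree_le_one (hdeg m)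
  have hconst (m : ℂ) : (p i m).coeff 0 = κ * (a * m + b) := by
    refine (((hpoly i).coeff 0).eq_eval_of_forall_ne (C κ * (C a * X + C b)) 0
      (fun m hm => ?_) m).trans (by simp)
    have h := congrArg (coeff · 0) (hE.C_mul_eq_mul_sh_sub hp₀ i m)
    rw [hform 0, hform m] at h
    simp only [sh_add, sh_mul, sh_C, sh_X, mul_coeff_zero, coeff_add, coeff_sub,
      coeff_C_zero, coeff_X_zero] at h
    simp only [eval_mul, eval_add, eval_C, eval_X]
    exact mul_left_cancel₀ hm (by linear_combination h)
  exact ⟨κ, fun l => by rw [hform l, hconst l, map_mul, map_add, map_mul]; ring⟩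

theorem classification (hE : IsLoopVirRankOne p) (hpoly : ∀ i, IsPolyFamily (p i))
    (hp : ∃ i l, p i l ≠ 0) :
    ∃ a b c : ℂ, c ≠ 0 ∧ ∀ i l, p i l = C (c ^ i) * (X + C (a * l + b)) := by
  obtain ⟨i₀, l₀, h₀⟩ := hp
  obtain ⟨b, hb⟩ := hE.exists_zero_zero_eq hpoly h₀
  obtain ⟨a, hp₀⟩ := hE.exists_zero_eq hpoly hb
  choose κ hκ using hE.exists_eq_C_mul hpoly hp₀
  have hκ₀ : κ 0 = 1 := by
    simpa using (congrArg (coeff · 1) ((hp₀ 0).symm.trans (hκ 0 0))).symm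
  have hadd (i j : ℤ) : κ (i + j) = κ i * κ j := by
    have h := congrArg (fun q => (derivative q).eval 0) (hE i j 1 0)
    simp only [hκ, sh_mul, sh_C, sh_X_add_C, derivative_mul, derivative_add,
      derivative_sub, derivative_C, derivative_X, eval_add, eval_sub, eval_mul, eval_X, eval_C,
      zero_mul, mul_zero, add_zero, zero_add, mul_one, sub_zero] at h
    linear_combination h
  obtain ⟨hκ₁, hzpow⟩ := eq_zpow_of_map_add hκ₀ hadd
  exact ⟨a, b, κ 1, hκ₁, fun i l => by rw [hκ i, hzpow i]⟩

end IsLoopVirRankOne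

lemma dV_add_smul (w : V) (l : ℂ) : dV w + l • w = (X + C l) • w := by
  ext <;> simp [dV, add_mul, smul_eq_C_mul]

lemma map_eq_of_map_dV (Φ : V →ₗ[ℂ] V) (l : ℂ) (hd : ∀ v, Φ (dV v) = dV (Φ v) + l • Φ v)
    (f g : P) : Φ (f, g) = sh l f • Φ (1, 0) + sh l g • Φ (0, 1) := by
  have hinl := map_eq_sh_smul (Φ ∘ₗ LinearMap.inl ℂ P P) l (fun f => by
    simp only [LinearMap.comp_apply, LinearMap.inl_apply]
    rw [← dV_add_smul, ← hd]
    simp [dV]) f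
  have hinr := map_eq_sh_smul (Φ ∘ₗ LinearMap.inr ℂ P P) l (fun g => by
    simp only [LinearMap.comp_apply, LinearMap.inr_apply]
    rw [← dV_add_smul, ← hd]
    simp [dV]) g
  simp only [LinearMap.comp_apply, LinearMap.inl_apply, LinearMap.inr_apply] at hinl hinr
  rw [← hinl, ← hinr, ← map_add, Prod.mk_add_mk, add_zero, zero_add]

/-- The `λ`-actions are given by four coefficient families:
`L_i ₗ x = p i λ x`, `L_i ₗ y = q i λ y`, `G_i ₗ y = r i λ x`, `G_i ₗ x = s i λ y`. -/
def HasCoeffs (L G : ℤ → ℂ → V → V) (p q r s : ℤ → ℂ → P) : Prop :=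
  ∀ i l f g, L i l (f, g) = (sh l f * p i l, sh l g * q i l)
    ∧ G i l (f, g) = (sh l g * r i l, sh l f * s i l)

/-- The conformal Jacobi identities in terms of the coefficient families of `HasCoeffs`.
Exchanging `x` and `y` turns a solution `(p, q, r, s)` into the solution `(q, p, s, r)`. -/
structure ClsCoeffs (p q r s : ℤ → ℂ → P) : Prop where
  poly_p : ∀ i, IsPolyFamily (p i)
  poly_q : ∀ i, IsPolyFamily (q i)
  poly_r : ∀ i, IsPolyFamily (r i)
  poly_s : ∀ i, IsPolyFamily (s i)
  vir_p : IsLoopVirRankOne p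
  vir_q : IsLoopVirRankOne q
  jacobi_s : ∀ i j l m,
    C (1 / 2 * l - m) * s (i + j) (l + m) = sh l (s j m) * q i l - sh m (p i l) * s j m
  jacobi_r : ∀ i j l m,
    C (1 / 2 * l - m) * r (i + j) (l + m) = sh l (r j m) * p i l - sh m (q i l) * r j m
  jacobi_p : ∀ i j l m, C 2 * p (i + j) (l + m) = sh l (s j m) * r i l + sh m (s i l) * r j m
  jacobi_q : ∀ i j l m, C 2 * q (i + j) (l + m) = sh l (r j m) * s i l + sh m (r i l) * s j m

lemma ClsCoeffs.swap {p q r s : ℤ → ℂ → P} (h : ClsCoeffs p q r s) : ClsCoeffs q p s r :=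
  ⟨h.poly_q, h.poly_p, h.poly_s, h.poly_r, h.vir_q, h.vir_p, h.jacobi_r, h.jacobi_s, h.jacobi_q,
    h.jacobi_p⟩

end Cls

namespace IsClsModule

open Cls

variable {LA GA : ℤ → ℂ → V →ₗ[ℂ] V}

lemma hasCoeffs (hmod : IsClsModule LA GA) :
    HasCoeffs (fun i l v => LA i l v) (fun i l v => GA i l v)
      (fun i l => (LA i l (1, 0)).1) (fun i l => (LA i l (0, 1)).2)
      (fun i l => (GA i l (0, 1)).1) (fun i l => (GA i l (1, 0)).2) := by
  obtain ⟨hd, hpar, -, -⟩ := hmod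
  intro i l f g
  dsimp only
  rw [map_eq_of_map_dV _ l (fun v => (hd i l v).1), map_eq_of_map_dV _ l (fun v => (hd i l v).2)]
  have hL₁ := ((hpar i l (1, 0)).1 rfl).1
  have hL₂ := ((hpar i l (0, 1)).2 rfl).1
  have hG₁ := ((hpar i l (1, 0)).1 rfl).2
  have hG₂ := ((hpar i l (0, 1)).2 rfl).2
  refine ⟨Prod.ext ?_ ?_, Prod.ext ?_ ?_⟩ <;> simp [hL₁, hL₂, hG₁, hG₂]

lemma clsCoeffs (hmod : IsClsModule LA GA) {p q r s : ℤ → ℂ → P}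
    (hc : HasCoeffs (fun i l v => LA i l v) (fun i l v => GA i l v) p q r s) :
    ClsCoeffs p q r s := by
  obtain ⟨-, -, hpoly, hjac⟩ := hmod
  have hL (i l f g) := (hc i l f g).1
  have hG (i l f g) := (hc i l f g).2
  simp only at hL hG
  have hpolyL (i : ℤ) (v : V) : IsPolyFamily (fun l => LA i l v) := by
    obtain ⟨N, w, _, h⟩ := hpoly i v
    exact ⟨N, w, fun l => (h l).1⟩
  have hpolyG (i : ℤ) (v : V) : IsPolyFamily (fun l => GA i l v) := by
    obtain ⟨N, _, u, h⟩ := hpoly i v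
    exact ⟨N, u, fun l => (h l).2⟩
  refine ⟨fun i => ?_, fun i => ?_, fun i => ?_, fun i => ?_, ?_, ?_, ?_, ?_, ?_, ?_⟩
  · simpa [hL] using (hpolyL i (1, 0)).map (LinearMap.fst ℂ P P)
  · simpa [hL] using (hpolyL i (0, 1)).map (LinearMap.snd ℂ P P)
  · simpa [hG] using (hpolyG i (0, 1)).map (LinearMap.fst ℂ P P)
  · simpa [hG] using (hpolyG i (1, 0)).map (LinearMap.snd ℂ P P)
  all_goals intro i j l m
  · simpa [hL, smul_eq_C_mul] using congrArg Prod.fst (hjac i j l m (1, 0)).1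
  · simpa [hL, smul_eq_C_mul] using congrArg Prod.snd (hjac i j l m (0, 1)).1
  · simpa [hL, hG, smul_eq_C_mul] using congrArg Prod.snd (hjac i j l m (1, 0)).2.1
  · simpa [hL, hG, smul_eq_C_mul] using congrArg Prod.fst (hjac i j l m (0, 1)).2.1
  · simpa [hL, hG, smul_eq_C_mul] using congrArg Prod.fst (hjac i j l m (1, 0)).2.2
  · simpa [hL, hG, smul_eq_C_mul] using congrArg Prod.snd (hjac i j l m (0, 1)).2.2

end IsClsModule

namespace Cls

/-- For `L_0 ₗ x = (∂ + aλ + b) x` and `L_0 ₗ y = (∂ + a'λ + b') y`, the equation is the Jacobi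
identity for `L_0`, `G_j` on `x`, with `s λ = G_j ₗ x`. -/
lemma exists_natDegree_leadingCoeff_const {s : ℂ → P} (hpoly : IsPolyFamily s) {l₀ : ℂ}
    (h₀ : s l₀ ≠ 0) {a b a' b' : ℂ} (heq : ∀ l m, C (1 / 2 * l - m) * s (l + m)
      = sh l (s m) * (X + C (a' * l + b')) - (X + C (m + (a * l + b))) * s m) :
    ∃ n : ℕ, (n : ℂ) + a' - a = 1 / 2 ∧ b' = b ∧
      ∃ K ≠ 0, ∀ l, (s l).natDegree = n ∧ (s l).leadingCoeff = K := by
  obtain ⟨n, hdeg, m₀, hm₀⟩ := hpoly.exists_natDegree_le_coeff_ne_zero h₀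
  have htop (l m : ℂ) : (1 / 2 * l - m) * (s (l + m)).coeff n
      = (((n : ℂ) + a' - a) * l - m + (b' - b)) * (s m).coeff n := by
    have h := congrArg (coeff · n) (heq l m)
    have hsplit : sh l (s m) * (X + C (a' * l + b')) - (X + C (m + (a * l + b))) * s m
        = (X + C (a' * l + b')) * (sh l (s m) - s m) + C (a' * l + b' - (m + (a * l + b))) * s m := by
      simp only [map_sub]; ring
    simp only [hsplit, coeff_C_mul, coeff_add, coeff_X_add_C_mul_sh_sub (hdeg m)] at h
    linear_combination h
  have hb : b' = b := by
    have h := htop 0 m₀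
    rw [zero_add] at h
    exact sub_eq_zero.mp (mul_right_cancel₀ hm₀ (by linear_combination -h : (b' - b) * _ = 0 * _))
  have hconst (l : ℂ) : (s l).coeff n = 2 * ((n : ℂ) + a' - a) * (s 0).coeff n := by
    refine (((hpoly.coeff n).eq_eval_of_forall_ne (C (2 * ((n : ℂ) + a' - a) * (s 0).coeff n)) 0
      (fun l hl => ?_) l).trans (eval_C ..))
    have h := htop l 0
    rw [add_zero, hb] at h
    rw [eval_C]
    exact mul_left_cancel₀ (by simpa using hl : 1 / 2 * l ≠ 0) (by linear_combination h)
  have hK : (s 0).coeff n ≠ 0 := fun h => hm₀ (by rw [hconst, h, mul_zero])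
  have hweight : (n : ℂ) + a' - a = 1 / 2 := by
    have h := hconst 0
    linear_combination (mul_right_cancel₀ hK (by linear_combination -h :
      (2 * ((n : ℂ) + a' - a)) * _ = 1 * _)) / 2
  have hlead (l : ℂ) : (s l).coeff n = (s 0).coeff n := by rw [hconst, hweight]; ring
  refine ⟨n, hweight, hb, (s 0).coeff n, hK, fun l => ?_⟩
  have hn : (s l).natDegree = n :=
    (hdeg l).antisymm (le_natDegree_of_ne_zero (by rw [hlead]; exact hK))
  exact ⟨hn, by rw [leadingCoeff, hn, hlead]⟩

/-- The coefficient families of `M_{a,b,c}` with respect to the basis `t x, y`. -/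
def IsMForm (a b c t : ℂ) (p q r s : ℤ → ℂ → P) : Prop :=
  ∀ i l, p i l = C (c ^ i) * (X + C (a * l + b)) ∧ q i l = C (c ^ i) * (X + C ((a + 1 / 2) * l + b))
    ∧ r i l = C (t⁻¹ * c ^ i) * (X + C (2 * a * l + b)) ∧ s i l = C (t * c ^ i)

namespace ClsCoeffs

variable {p q r s : ℤ → ℂ → P}

lemma p_zero_zero_eq (h : ClsCoeffs p q r s) : p 0 0 = q 0 0 := by
  have hp := h.jacobi_p 0 0 0 0
  have hq := h.jacobi_q 0 0 0 0
  simp only [add_zero, sh_zero_left] at hp hq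
  have h2 : C (2 : ℂ) * (p 0 0 - q 0 0) = 0 := by linear_combination hp - hq
  exact sub_eq_zero.mp ((mul_eq_zero.mp h2).resolve_left (by simp))

lemma exists_p_ne_zero (h : ClsCoeffs p q r s)
    (hnz : ∃ i l, p i l ≠ 0 ∨ q i l ≠ 0 ∨ r i l ≠ 0 ∨ s i l ≠ 0) : ∃ i l, p i l ≠ 0 := by
  by_contra! hp
  have hq (i : ℤ) (l : ℂ) : q i l = 0 := by
    by_contra! hq
    obtain ⟨a, b, c, -, hqf⟩ := h.vir_q.classification h.poly_q ⟨i, l, hq⟩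
    have h00 := h.p_zero_zero_eq
    rw [hp, hqf, zpow_zero, map_one, one_mul] at h00
    exact X_add_C_ne_zero _ h00.symm
  have hvanish (f : ℤ → ℂ → P) (hf : ∀ j l m, C (1 / 2 * l - m) * f j (l + m) = 0) (j : ℤ)
      (x : ℂ) : f j x = 0 := by
    have h' := hf j (2 / 3 * x - 1) (x / 3 + 1)
    rw [show 2 / 3 * x - 1 + (x / 3 + 1) = x by ring,
      show 1 / 2 * (2 / 3 * x - 1) - (x / 3 + 1) = -3 / 2 by ring] at h'
    exact (mul_eq_zero.mp h').resolve_left (by norm_num)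
  have hr := hvanish r fun j l m => by simpa [hp, hq] using h.jacobi_r 0 j l m
  have hs := hvanish s fun j l m => by simpa [hp, hq] using h.jacobi_s 0 j l m
  obtain ⟨i, l, h' | h' | h' | h'⟩ := hnz
  exacts [h' (hp i l), h' (hq i l), h' (hr i l), h' (hs i l)]

variable {a b c : ℂ}

lemma sh_s_mul_r (h : ClsCoeffs p q r s) (hp : ∀ i l, p i l = C (c ^ i) * (X + C (a * l + b)))
    (i : ℤ) (l : ℂ) : sh l (s i l) * r i l = C (c ^ (i + i)) * (X + C (a * (l + l) + b)) := by
  have h' := h.jacobi_p i i l l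
  rw [hp, show (C (2 : ℂ) : P) = 2 from map_ofNat C 2] at h'
  exact mul_left_cancel₀ (two_ne_zero (α := P)) (by linear_combination -h')

lemma s_ne_zero_and_r_ne_zero (h : ClsCoeffs p q r s) (hc : c ≠ 0)
    (hp : ∀ i l, p i l = C (c ^ i) * (X + C (a * l + b))) (i : ℤ) (l : ℂ) :
    s i l ≠ 0 ∧ r i l ≠ 0 := by
  have hne : sh l (s i l) * r i l ≠ 0 := by
    rw [h.sh_s_mul_r hp]
    exact mul_ne_zero (C_ne_zero.mpr (zpow_ne_zero _ hc)) (X_add_C_ne_zero _)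
  exact ⟨fun h0 => hne (by rw [h0, sh_zero, zero_mul]), fun h0 => hne (by rw [h0, mul_zero])⟩

lemma natDegree_s_add_natDegree_r (h : ClsCoeffs p q r s) (hc : c ≠ 0)
    (hp : ∀ i l, p i l = C (c ^ i) * (X + C (a * l + b))) (i : ℤ) (l : ℂ) :
    (s i l).natDegree + (r i l).natDegree = 1 := by
  obtain ⟨hs, hr⟩ := h.s_ne_zero_and_r_ne_zero hc hp i l
  have h' := congrArg natDegree (h.sh_s_mul_r hp i l)
  rwa [natDegree_mul (sh_eq_zero_iff.not.mpr hs) hr, natDegree_sh,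
    natDegree_C_mul (zpow_ne_zero _ hc), natDegree_X_add_C] at h'

lemma exists_natDegree_s (h : ClsCoeffs p q r s) (hc : c ≠ 0)
    (hp : ∀ i l, p i l = C (c ^ i) * (X + C (a * l + b))) {a' b' d : ℂ}
    (hq : ∀ i l, q i l = C (d ^ i) * (X + C (a' * l + b'))) (j : ℤ) :
    ∃ n : ℕ, (n : ℂ) + a' - a = 1 / 2 ∧ b' = b ∧
      ∃ K ≠ 0, ∀ l, (s j l).natDegree = n ∧ (s j l).leadingCoeff = K := by
  refine exists_natDegree_leadingCoeff_const (h.poly_s j)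
    (h.s_ne_zero_and_r_ne_zero hc hp j 0).1 fun l m => ?_
  have h' := h.jacobi_s 0 j l m
  rwa [zero_add, hp, hq, zpow_zero, zpow_zero, map_one, one_mul, one_mul, sh_X_add_C] at h'

lemma exists_eq_C_s (h : ClsCoeffs p q r s) (hc : c ≠ 0)
    (hp : ∀ i l, p i l = C (c ^ i) * (X + C (a * l + b))) {a' b' d : ℂ}
    (hq : ∀ i l, q i l = C (d ^ i) * (X + C (a' * l + b'))) (hs : ∀ i l, (s i l).natDegree = 0) :
    a' = a + 1 / 2 ∧ b' = b ∧ ∃ K : ℤ → ℂ, (∀ j, K j ≠ 0) ∧ ∀ j l, s j l = C (K j) := by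
  choose n hweight hb K hK hsK using h.exists_natDegree_s hc hp hq
  refine ⟨?_, hb 0, K, hK, fun j l => ?_⟩
  · have h' := hweight 0
    rw [← (hsK 0 0).1, hs 0 0, Nat.cast_zero] at h'
    linear_combination h'
  · rw [eq_C_of_natDegree_eq_zero (hs j l), ← (hsK j l).2, leadingCoeff, hs j l]

lemma isMForm (h : ClsCoeffs p q r s) (hc : c ≠ 0)
    (hp : ∀ i l, p i l = C (c ^ i) * (X + C (a * l + b))) {a' b' d : ℂ}
    (hq : ∀ i l, q i l = C (d ^ i) * (X + C (a' * l + b'))) (hs : ∀ i l, (s i l).natDegree = 0) :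
    ∃ t ≠ 0, IsMForm a b c t p q r s := by
  obtain ⟨rfl, hb', K, hK, hsC⟩ := h.exists_eq_C_s hc hp hq hs
  have hr (i : ℤ) (l : ℂ) : r i l = C ((K i)⁻¹ * c ^ (i + i)) * (X + C (a * (l + l) + b)) := by
    have h' := h.sh_s_mul_r hp i l
    rw [hsC, sh_C] at h'
    rw [map_mul, mul_assoc, ← h', ← mul_assoc, ← map_mul, inv_mul_cancel₀ (hK i), map_one, one_mul]
  have hd (i : ℤ) : d ^ i = c ^ i := by
    have h' := congrArg (coeff · 1) (h.jacobi_s i 0 1 0)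
    simp only [hsC, hp, hq, sh_C, sh_zero_left, coeff_C_mul, coeff_sub, coeff_mul_C, coeff_add,
      coeff_X_one, coeff_C, if_neg one_ne_zero, add_zero, mul_one] at h'
    exact sub_eq_zero.mp ((mul_eq_zero.mp (by linear_combination -h' :
      K 0 * (d ^ i - c ^ i) = 0)).resolve_left (hK 0))
  have hKc (i : ℤ) : K i = K 0 * c ^ i := by
    have h' := congrArg (coeff · 1) (h.jacobi_p i 0 0 0)
    simp only [hsC, hp, hr, sh_C, coeff_C_mul, coeff_add, coeff_X_one, coeff_C,
      if_neg one_ne_zero, add_zero, mul_one, zpow_zero, zpow_add₀ hc] at h'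
    field_simp [hK i, hK 0] at h'
    exact sub_eq_zero.mp (pow_eq_zero_iff two_ne_zero |>.mp (by linear_combination -h' :
      (K i - K 0 * c ^ i) ^ 2 = 0))
  refine ⟨K 0, hK 0, fun i l => ⟨hp i l, ?_, ?_, ?_⟩⟩
  · rw [hq, hd, hb']
  · have hci : c ^ i ≠ 0 := zpow_ne_zero i hc
    rw [hr, hKc, zpow_add₀ hc, show a * (l + l) = 2 * a * l by ring]
    congr 2
    field_simp [hK 0]
  · rw [hsC, hKc]

theorem classification (h : ClsCoeffs p q r s) (hp : ∃ i l, p i l ≠ 0) :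
    ∃ a b c t : ℂ, c ≠ 0 ∧ t ≠ 0 ∧ (IsMForm a b c t p q r s ∨ IsMForm a b c t q p s r) := by
  obtain ⟨a, b, c, hc, hpf⟩ := h.vir_p.classification h.poly_p hp
  have hq : ∃ i l, q i l ≠ 0 := ⟨0, 0, by
    rw [← h.p_zero_zero_eq, hpf, zpow_zero, map_one, one_mul]; exact X_add_C_ne_zero _⟩
  obtain ⟨a', b', d, hd, hqf⟩ := h.vir_q.classification h.poly_q hq
  choose n hweight _ _ _ hsK using h.exists_natDegree_s hc hpf hqf
  have hn (j : ℤ) : n j = n 0 := by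
    exact_mod_cast (by linear_combination hweight j - hweight 0 : (n j : ℂ) = n 0)
  have hsum (i : ℤ) (l : ℂ) : n 0 + (r i l).natDegree = 1 := by
    rw [← hn i, ← (hsK i l).1]; exact h.natDegree_s_add_natDegree_r hc hpf i l
  rcases Nat.le_one_iff_eq_zero_or_eq_one.mp (by have := hsum 0 0; omega : n 0 ≤ 1) with h0 | h1
  · obtain ⟨t, ht, hM⟩ := h.isMForm hc hpf hqf fun i l => by rw [(hsK i l).1, hn, h0]
    exact ⟨a, b, c, t, hc, ht, Or.inl hM⟩
  · obtain ⟨t, ht, hM⟩ := h.swap.isMForm hd hqf hpf fun i l => by have := hsum i l; omega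
    exact ⟨a', b', d, t, hd, ht, Or.inr hM⟩

end ClsCoeffs

lemma HasCoeffs.exists_ne_zero {L G : ℤ → ℂ → V → V} {p q r s : ℤ → ℂ → P}
    (hc : HasCoeffs L G p q r s) (hnontriv : ¬ ∀ i l v, L i l v = 0 ∧ G i l v = 0) :
    ∃ i l, p i l ≠ 0 ∨ q i l ≠ 0 ∨ r i l ≠ 0 ∨ s i l ≠ 0 := by
  by_contra! hzero
  refine hnontriv fun i l v => ?_
  obtain ⟨hp, hq, hr, hs⟩ := hzero i l
  rw [← Prod.mk.eta (p := v), (hc i l v.1 v.2).1, (hc i l v.1 v.2).2]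
  simp [hp, hq, hr, hs]

/-- The isomorphism is the rescaling `x ↦ α x`, `y ↦ β y`. -/
lemma clsIso_of_hasCoeffs {L₁ G₁ L₂ G₂ : ℤ → ℂ → V → V} {p q r s r' s' : ℤ → ℂ → P}
    (h₁ : HasCoeffs L₁ G₁ p q r s) (h₂ : HasCoeffs L₂ G₂ p q r' s') {α β : ℂ} (hα : α ≠ 0)
    (hβ : β ≠ 0) (hr : ∀ i l, α • r i l = β • r' i l) (hs : ∀ i l, β • s i l = α • s' i l) :
    ClsIso L₁ G₁ L₂ G₂ := by
  refine ⟨(LinearEquiv.smulOfNeZero ℂ P α hα).prodCongr (LinearEquiv.smulOfNeZero ℂ P β hβ),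
    fun v => ?_, fun v hv => by simp [hv], fun v hv => by simp [hv], fun i l v => ?_⟩
  · simp [dV]
  · rw [← Prod.mk.eta (p := v), (h₁ i l v.1 v.2).1, (h₁ i l v.1 v.2).2]
    refine ⟨?_, ?_⟩ <;> simp only [LinearEquiv.prodCongr_apply, LinearEquiv.smulOfNeZero_apply,
      (h₂ i l _ _).1, (h₂ i l _ _).2, sh_smul, smul_mul_assoc]
    rw [← mul_smul_comm, ← mul_smul_comm, ← mul_smul_comm, ← mul_smul_comm, hr, hs]

lemma hasCoeffs_M (a b c : ℂ) : HasCoeffs (LM a b c) (GM a b c)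
    (fun i l => C (c ^ i) * (X + C (a * l + b))) (fun i l => C (c ^ i) * (X + C ((a + 1 / 2) * l + b)))
    (fun i l => C (c ^ i) * (X + C (2 * a * l + b))) (fun i _ => C (c ^ i)) := by
  intro i l f g
  refine ⟨Prod.ext ?_ ?_, Prod.ext ?_ ?_⟩ <;> simp only [LM, GM] <;> ring

lemma hasCoeffs_M' (a b c : ℂ) : HasCoeffs (LM' (a + 1 / 2) b c) (GM' (a + 1 / 2) b c)
    (fun i l => C (c ^ i) * (X + C ((a + 1 / 2) * l + b))) (fun i l => C (c ^ i) * (X + C (a * l + b)))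
    (fun i _ => C (c ^ i)) (fun i l => C (c ^ i) * (X + C (2 * a * l + b))) := by
  intro i l f g
  refine ⟨Prod.ext ?_ ?_, Prod.ext ?_ ?_⟩ <;> simp only [LM', GM'] <;> ring_nf

lemma smul_C_inv_mul {t : ℂ} (ht : t ≠ 0) (x : ℂ) (f : P) : t • (C (t⁻¹ * x) * f) = C x * f := by
  rw [smul_eq_C_mul, ← mul_assoc, ← map_mul, mul_inv_cancel_left₀ ht]

namespace IsMForm

variable {L G : ℤ → ℂ → V → V} {p q r s : ℤ → ℂ → P} {a b c t : ℂ}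

lemma clsIso_M (hM : IsMForm a b c t p q r s) (ht : t ≠ 0) (hc : HasCoeffs L G p q r s) :
    ClsIso L G (LM a b c) (GM a b c) := by
  obtain rfl : p = _ := funext₂ fun i l => (hM i l).1
  obtain rfl : q = _ := funext₂ fun i l => (hM i l).2.1
  refine clsIso_of_hasCoeffs hc (hasCoeffs_M a b c) ht one_ne_zero (fun i l => ?_) (fun i l => ?_)
  · rw [(hM i l).2.2.1, smul_C_inv_mul ht, one_smul]
  · rw [(hM i l).2.2.2, one_smul, smul_eq_C_mul, map_mul]

lemma clsIso_M' (hM : IsMForm a b c t q p s r) (ht : t ≠ 0) (hc : HasCoeffs L G p q r s) :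
    ClsIso L G (LM' (a + 1 / 2) b c) (GM' (a + 1 / 2) b c) := by
  obtain rfl : p = _ := funext₂ fun i l => (hM i l).2.1
  obtain rfl : q = _ := funext₂ fun i l => (hM i l).1
  refine clsIso_of_hasCoeffs hc (hasCoeffs_M' a b c) one_ne_zero ht (fun i l => ?_) (fun i l => ?_)
  · rw [(hM i l).2.2.2, one_smul, smul_eq_C_mul, map_mul]
  · rw [(hM i l).2.2.1, smul_C_inv_mul ht, one_smul]

end IsMForm

end Cls

open Cls in
/-- every nontrivial free conformal `𝔠𝔩𝔰`-module of rank two, with even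
part `ℂ[∂]x` and odd part `ℂ[∂]y`, is isomorphic to some `M_{a,b,c}` or `M'_{a,b,c}`. -/
theorem stmt13 (LA GA : ℤ → ℂ → V →ₗ[ℂ] V) (hmod : IsClsModule LA GA)
    (hnontriv : ¬ ∀ (i : ℤ) (l : ℂ) (v : V), LA i l v = 0 ∧ GA i l v = 0) :
    ∃ (a b c : ℂ), c ≠ 0 ∧
      (ClsIso (fun i l v => LA i l v) (fun i l v => GA i l v) (LM a b c) (GM a b c)
      ∨ ClsIso (fun i l v => LA i l v) (fun i l v => GA i l v) (LM' a b c) (GM' a b c)) := by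
  have hc := hmod.hasCoeffs
  have hcoeffs := hmod.clsCoeffs hc
  obtain ⟨a, b, c, t, hc₀, ht, hM | hM'⟩ :=
    hcoeffs.classification (hcoeffs.exists_p_ne_zero (hc.exists_ne_zero hnontriv))
  · exact ⟨a, b, c, hc₀, Or.inl (hM.clsIso_M ht hc)⟩
  · exact ⟨a + 1 / 2, b, c, hc₀, Or.inr (hM'.clsIso_M' ht hc)⟩
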